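/- Let (A₁, V₁) and (A₂, V₂) be central arrangements over a field K. Then the product arrangement A = A₁ × A₂ in V₁ ⊕ V₂ is divisionally free if and only if both A₁ and A₂ are divisionally free. -/

import Mathlib

open scoped Classical

noncomputable section

namespace Arrangement

universe u u' u₁ u₂ v

variable (K : Type v) [Field K]

section Basic

variable {V : Type u} [AddCommGroup V] [Module K V]

/-- A (linear) hyperplane: the kernel of a nonzero linear functional. -/
def IsHyperplane (H : Submodule K V) : Prop :=
  ∃ f : V →ₗ[K] K, f ≠ 0 ∧ H = LinearMap.ker f

/-- A central arrangement: a finite set of linear hyperplanes. -/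
def IsCentralArrangement (A : Finset (Submodule K V)) : Prop :=
  ∀ H ∈ A, IsHyperplane K H

/-- The intersection lattice `L(A)`: all intersections of subsets of `A`
(with the ambient space `⊤` as the empty intersection). -/
def lattice (A : Finset (Submodule K V)) : Finset (Submodule K V) :=
  A.powerset.image fun S => S.inf id

/-- The restriction `A^X` of the arrangement `A` to `X`, an arrangement in `X`:
`A^X = { X ∩ H : H ∈ A, X ⊄ H }`. -/
def restrict (A : Finset (Submodule K V)) (X : Submodule K V) :
    Finset (Submodule K X) :=
  (A.filter fun H => ¬ X ≤ H).image fun H => H.comap X.subtype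

/-- The localization `A_X = { H ∈ A : X ⊆ H }`. -/
def localization (A : Finset (Submodule K V)) (X : Submodule K V) :
    Finset (Submodule K V) :=
  A.filter fun H => X ≤ H

/-- The Möbius function `μ(V, ·)` of a finite set `L` of subspaces, ordered by
reverse inclusion with top element the ambient space `⊤`:
`μ(⊤) = 1` and `μ(X) = - ∑_{Z ∈ L, X ⊊ Z} μ(Z)`. -/
def mob (L : Finset (Submodule K V)) (X : Submodule K V) : ℤ :=
  if X = ⊤ then 1
  else - ∑ Z ∈ (L.filter fun Z => X < Z).attach, mob L Z.1
termination_by (L.filter fun Z => X < Z).card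
decreasing_by
  have hZ := Z.2
  rw [Finset.mem_filter] at hZ
  refine Finset.card_lt_card ((Finset.ssubset_iff_of_subset ?_).mpr ?_)
  · intro W hW
    rw [Finset.mem_filter] at hW ⊢
    exact ⟨hW.1, lt_trans hZ.2 hW.2⟩
  · exact ⟨Z.1, Finset.mem_filter.mpr ⟨hZ.1, hZ.2⟩,
      fun h => absurd (Finset.mem_filter.mp h).2 (lt_irrefl _)⟩

/-- The characteristic polynomial `χ(A, t) = ∑_{X ∈ L(A)} μ(V, X) t^{dim X} ∈ ℤ[t]`. -/
def charPoly (A : Finset (Submodule K V)) : Polynomial ℤ :=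
  ∑ X ∈ lattice K A,
    Polynomial.C (mob K (lattice K A) X) * Polynomial.X ^ Module.finrank K X

end Basic

/-- Linear isomorphism of arrangements: a linear isomorphism of the ambient
spaces carrying one set of hyperplanes bijectively onto the other. -/
def ArrIso {V : Type u} [AddCommGroup V] [Module K V]
    {W : Type u'} [AddCommGroup W] [Module K W]
    (A : Finset (Submodule K V)) (B : Finset (Submodule K W)) : Prop :=
  ∃ e : V ≃ₗ[K] W, B = A.image fun H => H.map (e : V →ₗ[K] W)

/-- The product arrangement `A₁ × A₂` in `V₁ ⊕ V₂`. -/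
def prodArr {V₁ : Type u₁} [AddCommGroup V₁] [Module K V₁]
    {V₂ : Type u₂} [AddCommGroup V₂] [Module K V₂]
    (A₁ : Finset (Submodule K V₁)) (A₂ : Finset (Submodule K V₂)) :
    Finset (Submodule K (V₁ × V₂)) :=
  (A₁.image fun H => H.prod ⊤) ∪ (A₂.image fun H => Submodule.prod ⊤ H)

section FreeCoord

variable {n : ℕ}

/-- The linear polynomial in `K[x₁, …, xₙ]` corresponding to a linear form on `Kⁿ`. -/
def formPoly (f : (Fin n → K) →ₗ[K] K) : MvPolynomial (Fin n) K :=
  ∑ i, MvPolynomial.C (f (Pi.single i 1)) * MvPolynomial.X i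

/-- The module `D(A) = {θ ∈ Der_K(S) : θ(Q) ∈ Q·S}` of derivations associated to
a defining polynomial `Q`, as a submodule of all `K`-derivations of `S = K[x₁,…,xₙ]`. -/
def derModule (Q : MvPolynomial (Fin n) K) :
    Submodule (MvPolynomial (Fin n) K)
      (Derivation K (MvPolynomial (Fin n) K) (MvPolynomial (Fin n) K)) where
  carrier := {θ | θ Q ∈ Ideal.span {Q}}
  add_mem' := fun {a b} ha hb => by
    simp only [Set.mem_setOf_eq, Derivation.add_apply] at *
    exact add_mem ha hb
  zero_mem' := by
    simp only [Set.mem_setOf_eq, Derivation.zero_apply]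
    exact zero_mem _
  smul_mem' := fun c θ hθ => by
    simp only [Set.mem_setOf_eq, Derivation.smul_apply, smul_eq_mul] at *
    exact Ideal.mul_mem_left _ c hθ

/-- A defining polynomial `Q(A) = ∏_{H ∈ A} α_H` for a choice `α` of defining
linear forms. -/
def defPoly (A : Finset (Submodule K (Fin n → K)))
    (α : Submodule K (Fin n → K) → ((Fin n → K) →ₗ[K] K)) : MvPolynomial (Fin n) K :=
  ∏ H ∈ A, formPoly K (α H)

/-- Freeness of an arrangement in `Kⁿ`: for a choice of defining linear forms,
`D(A)` is a free module over `S = K[x₁,…,xₙ]`. -/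
def IsFreeCoord (A : Finset (Submodule K (Fin n → K))) : Prop :=
  ∃ α : Submodule K (Fin n → K) → ((Fin n → K) →ₗ[K] K),
    (∀ H ∈ A, α H ≠ 0 ∧ H = LinearMap.ker (α H)) ∧
    Module.Free (MvPolynomial (Fin n) K) (derModule K (defPoly K A α))

/-- `A` is free with multiset of exponents `b`: `D(A)` has a basis of `n`
homogeneous derivations whose polynomial degrees form the multiset `b`. -/
def IsFreeWithExpCoord (A : Finset (Submodule K (Fin n → K))) (b : Multiset ℕ) : Prop :=
  ∃ α : Submodule K (Fin n → K) → ((Fin n → K) →ₗ[K] K),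
    (∀ H ∈ A, α H ≠ 0 ∧ H = LinearMap.ker (α H)) ∧
    ∃ (e : Module.Basis (Fin n) (MvPolynomial (Fin n) K) (derModule K (defPoly K A α)))
      (d : Fin n → ℕ),
      (∀ i j, MvPolynomial.IsHomogeneous ((e i).1 (MvPolynomial.X j)) (d i)) ∧
      Finset.univ.val.map d = b

end FreeCoord

/-- Freeness of an arrangement in an abstract space, via a linear identification
of the ambient space with `Kⁿ`. -/
def IsFree {V : Type u} [AddCommGroup V] [Module K V]
    (A : Finset (Submodule K V)) : Prop :=
  ∃ (n : ℕ) (e : V ≃ₗ[K] (Fin n → K)),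
    IsFreeCoord K (A.image fun H => H.map (e : V →ₗ[K] Fin n → K))

/-- `A` is free with multiset of exponents `b`, via a linear identification of the
ambient space with `Kⁿ`. -/
def IsFreeWithExp {V : Type u} [AddCommGroup V] [Module K V]
    (A : Finset (Submodule K V)) (b : Multiset ℕ) : Prop :=
  ∃ (n : ℕ) (e : V ≃ₗ[K] (Fin n → K)),
    IsFreeWithExpCoord K (A.image fun H => H.map (e : V →ₗ[K] Fin n → K)) b

/-- Auxiliary fueled definition of divisional freeness: `DivFreeAux K n V A` holds
if `A` admits a division chain of length at most `n` down to dimension `≤ 2` or to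
the empty arrangement. -/
def DivFreeAux (n : ℕ) :
    (V : Type u) → [AddCommGroup V] → [Module K V] → Finset (Submodule K V) → Prop :=
  Nat.rec
    (motive := fun _ => (V : Type u) → [AddCommGroup V] → [Module K V] →
      Finset (Submodule K V) → Prop)
    (fun V i1 i2 A => letI := i1; letI := i2; Module.finrank K V ≤ 2 ∨ A = ∅)
    (fun _ ih V i1 i2 A => letI := i1; letI := i2;
      Module.finrank K V ≤ 2 ∨ A = ∅ ∨
        ∃ H ∈ A, ih ↥H (restrict K A H) ∧ charPoly K (restrict K A H) ∣ charPoly K A)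
    n

/-- Divisional freeness (Abe): an `ℓ`-arrangement `A` is divisionally free if
`ℓ ≤ 2`, or `A = ∅`, or there is `H ∈ A` with `A^H` divisionally free and
`χ(A^H, t) ∣ χ(A, t)` in `ℤ[t]`. -/
def IsDivFree {V : Type u} [AddCommGroup V] [Module K V]
    (A : Finset (Submodule K V)) : Prop :=
  DivFreeAux K (Module.finrank K V) V A

/-- Hereditary divisional freeness: every restriction `A^X`, `X ∈ L(A)`, is
divisionally free. -/
def IsHeredDivFree {V : Type u} [AddCommGroup V] [Module K V]
    (A : Finset (Submodule K V)) : Prop :=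
  ∀ X ∈ lattice K A, IsDivFree K (restrict K A X)

/-- Auxiliary fueled definition of inductive freeness. -/
def IndFreeAux (n : ℕ) :
    (V : Type u) → [AddCommGroup V] → [Module K V] → Finset (Submodule K V) → Prop :=
  Nat.rec
    (motive := fun _ => (V : Type u) → [AddCommGroup V] → [Module K V] →
      Finset (Submodule K V) → Prop)
    (fun V i1 i2 A => A = ∅)
    (fun _ ih V i1 i2 A => letI := i1; letI := i2;
      A = ∅ ∨ ∃ H ∈ A, ∃ b' b'' : Multiset ℕ,
        ih V (A.erase H) ∧ ih ↥H (restrict K A H) ∧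
        IsFreeWithExp K (A.erase H) b' ∧ IsFreeWithExp K (restrict K A H) b'' ∧
        b'' ≤ b')
    n

/-- Inductive freeness: the smallest class of arrangements containing the empty
arrangements and closed under the addition part of the Addition–Deletion theorem
(i.e. membership has a finite derivation). -/
def IsIndFree {V : Type u} [AddCommGroup V] [Module K V]
    (A : Finset (Submodule K V)) : Prop :=
  ∃ n, IndFreeAux K n V A

/-- The `i`-th coordinate functional `x_i` on `ℂ^ℓ`. -/
def xcoord (ℓ : ℕ) (i : Fin ℓ) : (Fin ℓ → ℂ) →ₗ[ℂ] ℂ := LinearMap.proj i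

/-- The Orlik–Solomon intermediate arrangement `A^k_ℓ(r)` in `ℂ^ℓ` with defining
polynomial `x₁ ⋯ x_k ∏_{i<j, 0 ≤ n < r} (x_i - ζⁿ x_j)`, where `ζ` is a primitive
`r`-th root of unity. -/
def Akl (r ℓ k : ℕ) (ζ : ℂ) : Finset (Submodule ℂ (Fin ℓ → ℂ)) :=
  ((Finset.univ.filter fun i : Fin ℓ => (i : ℕ) < k).image fun i =>
    LinearMap.ker (xcoord ℓ i)) ∪
  (((Finset.univ : Finset (Fin ℓ × Fin ℓ × Fin r)).filter fun p => p.1 < p.2.1).image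
    fun p => LinearMap.ker (xcoord ℓ p.1 - ζ ^ (p.2.2 : ℕ) • xcoord ℓ p.2.1))

end Arrangement

/-!
The lattice of `A₁ × A₂` is `L(A₁) × L(A₂)` (via `(X₁, X₂) ↦ X₁ ⊕ X₂`) and the Möbius function is
multiplicative on it, so `χ(A₁ × A₂) = χ(A₁) χ(A₂)`. The hyperplanes of the product are the
`H₁ ⊕ V₂` and `V₁ ⊕ H₂`, and the restriction to `H₁ ⊕ V₂` is isomorphic to `A₁^{H₁} × A₂`.
Since characteristic polynomials are monic, `χ(A₂)` can be cancelled, so by induction on the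
dimension `H₁ ⊕ V₂` is a division of `A₁ × A₂` iff `H₁` is a division of `A₁` and `A₂` is
divisionally free. A factor of dimension `≤ 2` is divisionally free without exhibiting a
division, but the product may need one from it; there every hyperplane `H` is a division: either
`A^H = ∅` and `t^{dim H} ∣ χ(A)`, or `χ(A^H) = t - 1` and `χ(A, 1) = 0`.
-/

namespace Arrangement

open Module Polynomial

section General

variable {α M : Type*} [PartialOrder α] [AddCommMonoid M] {L : Finset α} {x : α}

theorem sum_filter_le_eq_add_sum_filter_lt (hx : x ∈ L) (f : α → M) :
    ∑ z ∈ L.filter (x ≤ ·), f z = f x + ∑ z ∈ L.filter (x < ·), f z := by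
  have : L.filter (x ≤ ·) = insert x (L.filter (x < ·)) := by
    ext z
    simp only [Finset.mem_filter, Finset.mem_insert, le_iff_eq_or_lt]
    grind
  rw [this, Finset.sum_insert (by simp)]

theorem card_filter_lt_lt_of_lt {z : α} (hz : z ∈ L) (hxz : x < z) :
    (L.filter (z < ·)).card < (L.filter (x < ·)).card :=
  Finset.card_lt_card <| (Finset.ssubset_iff_of_subset
    (Finset.monotone_filter_right L fun _ _ => hxz.trans)).mpr
    ⟨z, Finset.mem_filter.mpr ⟨hz, hxz⟩, by simp⟩

end General

section

variable {K : Type*} [Field K] {V : Type*} [AddCommGroup V] [Module K V]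
  {W : Type*} [AddCommGroup W] [Module K W]

section Hyperplane

theorem IsHyperplane.ne_top {H : Submodule K V} (hH : IsHyperplane K H) : H ≠ ⊤ := by
  obtain ⟨f, hf, rfl⟩ := hH
  exact fun h => hf (LinearMap.ker_eq_top.mp h)

theorem IsHyperplane.finrank_add_one [FiniteDimensional K V] {H : Submodule K V}
    (hH : IsHyperplane K H) : finrank K H + 1 = finrank K V := by
  obtain ⟨f, hf, rfl⟩ := hH
  exact Module.Dual.finrank_ker_add_one_of_ne_zero hf

theorem IsHyperplane.comap {H : Submodule K V} (hH : IsHyperplane K H) (g : W →ₗ[K] V)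
    (hg : ¬ LinearMap.range g ≤ H) : IsHyperplane K (H.comap g) := by
  obtain ⟨f, -, rfl⟩ := hH
  refine ⟨f ∘ₗ g, fun h => hg ?_, (LinearMap.ker_comp g f).symm⟩
  rintro _ ⟨w, rfl⟩
  simpa using LinearMap.congr_fun h w

theorem IsHyperplane.comap_of_surjective {H : Submodule K V} (hH : IsHyperplane K H)
    {g : W →ₗ[K] V} (hg : Function.Surjective g) : IsHyperplane K (H.comap g) :=
  hH.comap g fun h => hH.ne_top (top_unique (LinearMap.range_eq_top.mpr hg ▸ h))

theorem IsCentralArrangement.restrict {A : Finset (Submodule K V)}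
    (hA : IsCentralArrangement K A) (X : Submodule K V) :
    IsCentralArrangement K (restrict K A X) := by
  simp only [IsCentralArrangement, Arrangement.restrict, Finset.forall_mem_image,
    Finset.mem_filter, and_imp]
  exact fun H hH hXH => (hA H hH).comap X.subtype (by rwa [Submodule.range_subtype])

theorem IsCentralArrangement.map {A : Finset (Submodule K V)}
    (hA : IsCentralArrangement K A) (e : V ≃ₗ[K] W) :
    IsCentralArrangement K (A.image (·.map (e : V →ₗ[K] W))) := by
  simp only [IsCentralArrangement, Finset.forall_mem_image, Submodule.map_equiv_eq_comap_symm]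
  exact fun H hH => (hA H hH).comap_of_surjective e.symm.surjective

end Hyperplane

section Lattice

variable {A : Finset (Submodule K V)} {L : Finset (Submodule K V)} {X Y : Submodule K V}

theorem mem_lattice_iff : X ∈ lattice K A ↔ ∃ S ⊆ A, S.inf id = X := by
  simp [lattice]

theorem top_mem_lattice (A : Finset (Submodule K V)) : ⊤ ∈ lattice K A :=
  mem_lattice_iff.mpr ⟨∅, Finset.empty_subset _, Finset.inf_empty⟩

theorem le_of_mem_lattice (hY : ∀ H ∈ A, Y ≤ H) (hX : X ∈ lattice K A) : Y ≤ X := by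
  obtain ⟨S, hS, rfl⟩ := mem_lattice_iff.mp hX
  exact Finset.le_inf fun H hH => hY H (hS hH)

theorem comap_finset_inf {U : Type*} [AddCommGroup U] [Module K U] (g : V →ₗ[K] U)
    (T : Finset (Submodule K U)) : (T.inf id).comap g = T.inf (·.comap g) :=
  Finset.apply_inf_eq_inf_comp _ (fun _ _ => Submodule.comap_inf _ _ _) (Submodule.comap_top _)

theorem lattice_empty : lattice K (∅ : Finset (Submodule K V)) = {⊤} := by
  simp [lattice]

theorem mob_top (L : Finset (Submodule K V)) : mob K L ⊤ = 1 := by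
  rw [mob, if_pos rfl]

theorem mob_of_ne_top (hX : X ≠ ⊤) : mob K L X = -∑ Z ∈ L.filter (X < ·), mob K L Z := by
  rw [mob, if_neg hX, Finset.sum_attach _ (mob K L)]

theorem sum_mob_filter_le (hX : X ∈ L) :
    ∑ Z ∈ L.filter (X ≤ ·), mob K L Z = if X = ⊤ then 1 else 0 := by
  rw [sum_filter_le_eq_add_sum_filter_lt hX]
  split_ifs with hXtop
  · subst hXtop
    rw [Finset.filter_false_of_mem fun Z _ => not_top_lt, Finset.sum_empty, mob_top, add_zero]
  · rw [mob_of_ne_top hXtop, neg_add_cancel]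

theorem eq_mob_of_sum_filter_le {f : Submodule K V → ℤ}
    (hf : ∀ X ∈ L, ∑ Z ∈ L.filter (X ≤ ·), f Z = if X = ⊤ then 1 else 0) (hX : X ∈ L) :
    f X = mob K L X := by
  induction hn : (L.filter (X < ·)).card using Nat.strong_induction_on generalizing X with
  | _ n ih =>
  have hsum := (hf X hX).trans (sum_mob_filter_le hX).symm
  rw [sum_filter_le_eq_add_sum_filter_lt hX, sum_filter_le_eq_add_sum_filter_lt hX,
    Finset.sum_congr rfl fun Z hZ => ih _ (hn ▸ card_filter_lt_lt_of_lt
      (Finset.mem_filter.mp hZ).1 (Finset.mem_filter.mp hZ).2) (Finset.mem_filter.mp hZ).1 rfl]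
    at hsum
  exact add_right_cancel hsum

theorem restrict_eq_empty_iff {H : Submodule K V} : restrict K A H = ∅ ↔ ∀ H' ∈ A, H ≤ H' := by
  simp [restrict, Finset.filter_eq_empty_iff]

theorem charPoly_empty : charPoly K (∅ : Finset (Submodule K V)) = Polynomial.X ^ finrank K V := by
  simp [charPoly, lattice_empty, mob_top]

end Lattice

section CharPoly

variable {A : Finset (Submodule K V)}

theorem charPoly_eval_one (hA : IsCentralArrangement K A) (hne : A.Nonempty) :
    (charPoly K A).eval 1 = 0 := by
  obtain ⟨H, hH⟩ := hne
  have hcenter : A.inf id ∈ lattice K A := mem_lattice_iff.mpr ⟨A, subset_rfl, rfl⟩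
  have hcenter_ne_top : A.inf id ≠ ⊤ := fun h =>
    (hA H hH).ne_top (top_unique (h ▸ Finset.inf_le hH))
  have hsum := sum_mob_filter_le hcenter
  have hall : (lattice K A).filter (A.inf id ≤ ·) = lattice K A :=
    Finset.filter_true_of_mem fun _ hX => le_of_mem_lattice (fun _ hH => Finset.inf_le hH) hX
  rw [hall, if_neg hcenter_ne_top] at hsum
  simp [charPoly, eval_finsetSum, hsum]

theorem X_sub_one_dvd_charPoly (hA : IsCentralArrangement K A) (hne : A.Nonempty) :
    X - C 1 ∣ charPoly K A :=
  dvd_iff_isRoot.mpr (charPoly_eval_one hA hne)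

variable [FiniteDimensional K V]

theorem natDegree_charPoly_le (A : Finset (Submodule K V)) :
    (charPoly K A).natDegree ≤ finrank K V :=
  natDegree_sum_le_of_forall_le _ _ fun X _ =>
    (natDegree_C_mul_X_pow_le _ _).trans (Submodule.finrank_le X)

theorem coeff_charPoly_finrank (A : Finset (Submodule K V)) :
    (charPoly K A).coeff (finrank K V) = 1 := by
  rw [charPoly, finsetSum_coeff, Finset.sum_eq_single_of_mem ⊤ (top_mem_lattice A)]
  · simp [mob_top]
  · intro X _ hX
    simp [coeff_X_pow, (Submodule.finrank_lt hX).ne']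

theorem charPoly_monic (A : Finset (Submodule K V)) : (charPoly K A).Monic :=
  monic_of_natDegree_le_of_coeff_eq_one _ (natDegree_charPoly_le A) (coeff_charPoly_finrank A)

theorem X_pow_finrank_dvd_charPoly {Y : Submodule K V} (hY : ∀ H ∈ A, Y ≤ H) :
    X ^ finrank K Y ∣ charPoly K A :=
  Finset.dvd_sum fun _ hX =>
    (pow_dvd_pow _ (Submodule.finrank_mono (le_of_mem_lattice hY hX))).mul_left _

theorem charPoly_restrict_dvd_of_finrank_le_one (hA : IsCentralArrangement K A)
    {H : Submodule K V} (hH : H ∈ A) (h1 : finrank K H ≤ 1) :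
    charPoly K (restrict K A H) ∣ charPoly K A := by
  by_cases hempty : restrict K A H = ∅
  · rw [hempty, charPoly_empty]
    exact X_pow_finrank_dvd_charPoly (restrict_eq_empty_iff.mp hempty)
  have hline : charPoly K (restrict K A H) = X - C 1 := by
    refine eq_of_monic_of_dvd_of_natDegree_le (monic_X_sub_C 1) (charPoly_monic _)
      (X_sub_one_dvd_charPoly (hA.restrict H) (Finset.nonempty_iff_ne_empty.mpr hempty)) ?_
    rw [natDegree_X_sub_C]
    exact (natDegree_charPoly_le _).trans h1
  rw [hline]
  exact X_sub_one_dvd_charPoly hA ⟨H, hH⟩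

end CharPoly

section DivFree

variable (K) in
def IsDivision (A : Finset (Submodule K V)) (H : Submodule K V) : Prop :=
  IsDivFree K (restrict K A H) ∧ charPoly K (restrict K A H) ∣ charPoly K A

variable {A : Finset (Submodule K V)}

theorem isDivFree_of_finrank_le_two (h : finrank K V ≤ 2) : IsDivFree K A := by
  unfold IsDivFree
  cases finrank K V <;> exact Or.inl h

theorem isDivFree_empty : IsDivFree K (∅ : Finset (Submodule K V)) := by
  unfold IsDivFree
  cases finrank K V
  exacts [Or.inr rfl, Or.inr (Or.inl rfl)]

theorem isDivFree_iff [FiniteDimensional K V] (hA : IsCentralArrangement K A) :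
    IsDivFree K A ↔ finrank K V ≤ 2 ∨ A = ∅ ∨ ∃ H ∈ A, IsDivision K A H := by
  by_cases h2 : finrank K V ≤ 2
  · exact iff_of_true (isDivFree_of_finrank_le_two h2) (Or.inl h2)
  obtain ⟨n, hn⟩ : ∃ n, finrank K V = n + 1 := ⟨finrank K V - 1, by omega⟩
  have hsucc : IsDivFree K A ↔ DivFreeAux K (n + 1) V A := by rw [IsDivFree, hn]
  rw [hsucc]
  refine or_congr_right (or_congr_right (exists_congr fun H =>
    and_congr_right fun hH => and_congr_left' ?_))
  have := (hA H hH).finrank_add_one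
  rw [IsDivFree, show finrank K H = n by omega]
  rfl

theorem IsDivision.isDivFree [FiniteDimensional K V] {H : Submodule K V}
    (hdiv : IsDivision K A H) (hH : H ∈ A) (hA : IsCentralArrangement K A) : IsDivFree K A :=
  (isDivFree_iff hA).mpr (Or.inr (Or.inr ⟨H, hH, hdiv⟩))

theorem IsDivFree.exists_division [FiniteDimensional K V] (hdf : IsDivFree K A)
    (hA : IsCentralArrangement K A) (hne : A.Nonempty) : ∃ H ∈ A, IsDivision K A H := by
  by_cases h2 : finrank K V ≤ 2
  · obtain ⟨H, hH⟩ := hne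
    have := (hA H hH).finrank_add_one
    exact ⟨H, hH, isDivFree_of_finrank_le_two (by omega),
      charPoly_restrict_dvd_of_finrank_le_one hA hH (by omega)⟩
  · rcases (isDivFree_iff hA).mp hdf with h | h | h
    · exact absurd h h2
    · exact absurd h hne.ne_empty
    · exact h

end DivFree

section Transport

theorem mob_image_orderIso (φ : Submodule K V ≃o Submodule K W) {L : Finset (Submodule K V)}
    {X : Submodule K V} (hX : X ∈ L) : mob K (L.image φ) (φ X) = mob K L X := by
  refine (eq_mob_of_sum_filter_le (f := fun Y => mob K L (φ.symm Y)) ?_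
    (Finset.mem_image_of_mem _ hX)).symm.trans (by simp)
  simp only [Finset.forall_mem_image]
  intro Y hY
  rw [Finset.filter_image, Finset.filter_congr fun Z _ => φ.le_iff_le,
    Finset.sum_image fun _ _ _ _ h => φ.injective h]
  simpa using sum_mob_filter_le hY

variable (e : V ≃ₗ[K] W)

theorem inf_image_map (S : Finset (Submodule K V)) :
    (S.image (·.map (e : V →ₗ[K] W))).inf id = (S.inf id).map (e : V →ₗ[K] W) := by
  rw [Finset.inf_image]
  exact (map_finset_inf (Submodule.orderIsoMapComap e) S id).symm

theorem lattice_map (A : Finset (Submodule K V)) :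
    lattice K (A.image (·.map (e : V →ₗ[K] W))) =
      (lattice K A).image (·.map (e : V →ₗ[K] W)) := by
  ext X
  simp only [mem_lattice_iff, Finset.mem_image, Finset.subset_image_iff]
  constructor
  · rintro ⟨_, ⟨S, hS, rfl⟩, rfl⟩
    exact ⟨_, ⟨S, hS, rfl⟩, (inf_image_map e S).symm⟩
  · rintro ⟨_, ⟨S, hS, rfl⟩, rfl⟩
    exact ⟨_, ⟨S, hS, rfl⟩, inf_image_map e S⟩

theorem mob_map {L : Finset (Submodule K V)} {X : Submodule K V} (hX : X ∈ L) :
    mob K (L.image (·.map (e : V →ₗ[K] W))) (X.map (e : V →ₗ[K] W)) = mob K L X :=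
  mob_image_orderIso (Submodule.orderIsoMapComap e) hX

theorem charPoly_map [FiniteDimensional K V] (A : Finset (Submodule K V)) :
    charPoly K (A.image (·.map (e : V →ₗ[K] W))) = charPoly K A := by
  rw [charPoly, lattice_map,
    Finset.sum_image fun _ _ _ _ h => Submodule.map_injective_of_injective e.injective h]
  refine Finset.sum_congr rfl fun X hX => ?_
  rw [mob_map e hX, LinearEquiv.finrank_map_eq]

theorem restrict_map (A : Finset (Submodule K V)) (H : Submodule K V) :
    restrict K (A.image (·.map (e : V →ₗ[K] W))) (H.map (e : V →ₗ[K] W)) =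
      (restrict K A H).image (·.map (e.submoduleMap H : H →ₗ[K] H.map (e : V →ₗ[K] W))) := by
  simp only [restrict, Finset.filter_image, Finset.image_image]
  rw [Finset.filter_congr fun Y _ =>
    not_congr (Submodule.map_le_map_iff_of_injective e.injective H Y)]
  refine Finset.image_congr fun Y _ => ?_
  ext ⟨_, v, hv, rfl⟩
  simp [Submodule.map_equiv_eq_comap_symm]

universe x y in
theorem isDivFree_map_of_finrank_le (n : ℕ) :
    ∀ {V : Type x} [AddCommGroup V] [Module K V] [FiniteDimensional K V]
      {W : Type y} [AddCommGroup W] [Module K W] (e : V ≃ₗ[K] W) {A : Finset (Submodule K V)},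
      IsCentralArrangement K A → finrank K V ≤ n →
      (IsDivFree K (A.image (·.map (e : V →ₗ[K] W))) ↔ IsDivFree K A) := by
  induction n with
  | zero =>
    intro V _ _ _ W _ _ e A _ hn
    exact iff_of_true (isDivFree_of_finrank_le_two (by rw [← e.finrank_eq]; omega))
      (isDivFree_of_finrank_le_two (by omega))
  | succ n ih =>
    intro V _ _ _ W _ _ e A hA hn
    have : FiniteDimensional K W := e.finiteDimensional
    rw [isDivFree_iff (hA.map e), isDivFree_iff hA, ← e.finrank_eq, Finset.image_eq_empty,
      Finset.exists_mem_image]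
    refine or_congr_right (or_congr_right (exists_congr fun H => and_congr_right fun hH => ?_))
    have := (hA H hH).finrank_add_one
    rw [IsDivision, IsDivision, restrict_map, charPoly_map, charPoly_map,
      ih (e.submoduleMap H) (hA.restrict H) (by omega)]

theorem isDivFree_map [FiniteDimensional K V] {A : Finset (Submodule K V)}
    (hA : IsCentralArrangement K A) :
    IsDivFree K (A.image (·.map (e : V →ₗ[K] W))) ↔ IsDivFree K A :=
  isDivFree_map_of_finrank_le _ e hA le_rfl

theorem restrict_top {A : Finset (Submodule K V)} (hA : IsCentralArrangement K A) :
    restrict K A ⊤ =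
      A.image (·.map (Submodule.topEquiv (R := K) (M := V)).symm.toLinearMap) := by
  have hall : A.filter (fun H => ¬ ⊤ ≤ H) = A :=
    Finset.filter_true_of_mem fun H hH h => (hA H hH).ne_top (top_unique h)
  rw [restrict, hall]
  refine Finset.image_congr fun H _ => ?_
  ext
  simp [Submodule.map_equiv_eq_comap_symm]

theorem isDivFree_restrict_top [FiniteDimensional K V] {A : Finset (Submodule K V)}
    (hA : IsCentralArrangement K A) : IsDivFree K (restrict K A ⊤) ↔ IsDivFree K A := by
  rw [restrict_top hA]
  exact isDivFree_map _ hA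

theorem charPoly_restrict_top [FiniteDimensional K V] {A : Finset (Submodule K V)}
    (hA : IsCentralArrangement K A) : charPoly K (restrict K A ⊤) = charPoly K A := by
  rw [restrict_top hA, charPoly_map]

end Transport

section Product

variable {V₁ : Type*} [AddCommGroup V₁] [Module K V₁] {V₂ : Type*} [AddCommGroup V₂] [Module K V₂]
  {A₁ : Finset (Submodule K V₁)} {A₂ : Finset (Submodule K V₂)}

theorem prod_le_prod_iff {p p' : Submodule K V₁} {q q' : Submodule K V₂} :
    p.prod q ≤ p'.prod q' ↔ p ≤ p' ∧ q ≤ q' :=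
  ⟨fun h => ⟨fun x hx => (h (show (x, 0) ∈ p.prod q from ⟨hx, q.zero_mem⟩)).1,
      fun y hy => (h (show (0, y) ∈ p.prod q from ⟨p.zero_mem, hy⟩)).2⟩,
    fun h => Submodule.prod_mono h.1 h.2⟩

theorem prod_injective :
    Function.Injective fun p : Submodule K V₁ × Submodule K V₂ => p.1.prod p.2 :=
  fun _ _ h => Prod.ext (le_antisymm (prod_le_prod_iff.mp h.le).1 (prod_le_prod_iff.mp h.ge).1)
    (le_antisymm (prod_le_prod_iff.mp h.le).2 (prod_le_prod_iff.mp h.ge).2)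

theorem IsCentralArrangement.prodArr (h₁ : IsCentralArrangement K A₁)
    (h₂ : IsCentralArrangement K A₂) : IsCentralArrangement K (prodArr K A₁ A₂) := by
  simp only [IsCentralArrangement, Arrangement.prodArr, Finset.mem_union, Finset.mem_image]
  rintro _ (⟨H, hH, rfl⟩ | ⟨H, hH, rfl⟩)
  · rw [← Submodule.comap_fst]
    exact (h₁ H hH).comap_of_surjective LinearMap.fst_surjective
  · rw [← Submodule.comap_snd]
    exact (h₂ H hH).comap_of_surjective LinearMap.snd_surjective

theorem exists_mem_prodArr {p : Submodule K (V₁ × V₂) → Prop} :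
    (∃ H ∈ prodArr K A₁ A₂, p H) ↔
      (∃ H₁ ∈ A₁, p (H₁.prod ⊤)) ∨ ∃ H₂ ∈ A₂, p (Submodule.prod ⊤ H₂) := by
  simp [prodArr, or_and_right, exists_or]

theorem prodArr_eq_empty_iff : prodArr K A₁ A₂ = ∅ ↔ A₁ = ∅ ∧ A₂ = ∅ := by
  simp [prodArr]

theorem prodArr_mono {T₁ : Finset (Submodule K V₁)} {T₂ : Finset (Submodule K V₂)}
    (h₁ : T₁ ⊆ A₁) (h₂ : T₂ ⊆ A₂) : prodArr K T₁ T₂ ⊆ prodArr K A₁ A₂ :=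
  Finset.union_subset_union (Finset.image_subset_image h₁) (Finset.image_subset_image h₂)

theorem exists_eq_prodArr_of_subset {S : Finset (Submodule K (V₁ × V₂))}
    (hS : S ⊆ prodArr K A₁ A₂) : ∃ T₁ ⊆ A₁, ∃ T₂ ⊆ A₂, S = prodArr K T₁ T₂ := by
  refine ⟨A₁.filter (·.prod ⊤ ∈ S), Finset.filter_subset _ _,
    A₂.filter (Submodule.prod ⊤ · ∈ S), Finset.filter_subset _ _, ?_⟩
  ext H
  have := @hS H
  simp only [prodArr, Finset.mem_union, Finset.mem_image, Finset.mem_filter] at this ⊢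
  grind

theorem inf_prodArr (T₁ : Finset (Submodule K V₁)) (T₂ : Finset (Submodule K V₂)) :
    (prodArr K T₁ T₂).inf id = (T₁.inf id).prod (T₂.inf id) := by
  simp only [prodArr, Finset.inf_union, Finset.inf_image, Function.id_comp,
    ← Submodule.comap_fst, ← Submodule.comap_snd]
  rw [← comap_finset_inf, ← comap_finset_inf, Submodule.comap_fst, Submodule.comap_snd,
    Submodule.prod_inf_prod, inf_top_eq, top_inf_eq]

theorem lattice_prodArr (A₁ : Finset (Submodule K V₁)) (A₂ : Finset (Submodule K V₂)) :
    lattice K (prodArr K A₁ A₂) =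
      (lattice K A₁ ×ˢ lattice K A₂).image fun p => p.1.prod p.2 := by
  ext X
  simp only [mem_lattice_iff, Finset.mem_image, Finset.mem_product, Prod.exists]
  constructor
  · rintro ⟨S, hS, rfl⟩
    obtain ⟨T₁, hT₁, T₂, hT₂, rfl⟩ := exists_eq_prodArr_of_subset hS
    exact ⟨_, _, ⟨⟨T₁, hT₁, rfl⟩, ⟨T₂, hT₂, rfl⟩⟩, (inf_prodArr T₁ T₂).symm⟩
  · rintro ⟨_, _, ⟨⟨T₁, hT₁, rfl⟩, ⟨T₂, hT₂, rfl⟩⟩, rfl⟩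
    exact ⟨_, prodArr_mono hT₁ hT₂, inf_prodArr T₁ T₂⟩

theorem mob_prodArr {X₁ : Submodule K V₁} {X₂ : Submodule K V₂}
    (hX₁ : X₁ ∈ lattice K A₁) (hX₂ : X₂ ∈ lattice K A₂) :
    mob K (lattice K (prodArr K A₁ A₂)) (X₁.prod X₂) =
      mob K (lattice K A₁) X₁ * mob K (lattice K A₂) X₂ := by
  set f : Submodule K (V₁ × V₂) → ℤ := fun Z =>
    mob K (lattice K A₁) (Z.comap (LinearMap.inl K V₁ V₂)) *
      mob K (lattice K A₂) (Z.comap (LinearMap.inr K V₁ V₂))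
  have hf (Z₁ : Submodule K V₁) (Z₂ : Submodule K V₂) :
      f (Z₁.prod Z₂) = mob K (lattice K A₁) Z₁ * mob K (lattice K A₂) Z₂ := by
    simp only [f, Submodule.prod_comap_inl, Submodule.prod_comap_inr]
  rw [← hf]
  refine (eq_mob_of_sum_filter_le ?_ ?_).symm
  · rw [lattice_prodArr]
    simp only [Finset.forall_mem_image, Finset.mem_product, Prod.forall, and_imp]
    intro Y₁ Y₂ hY₁ hY₂
    rw [Finset.filter_image, Finset.filter_congr fun _ _ => prod_le_prod_iff,
      Finset.filter_product (p := (Y₁ ≤ ·)) (q := (Y₂ ≤ ·)),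
      Finset.sum_image fun _ _ _ _ h => prod_injective h, Finset.sum_product]
    simp only [hf, ← Finset.mul_sum, ← Finset.sum_mul, sum_mob_filter_le hY₁,
      sum_mob_filter_le hY₂, Submodule.prod_eq_top_iff]
    split_ifs <;> simp_all
  · rw [lattice_prodArr]
    exact Finset.mem_image.mpr ⟨(X₁, X₂), Finset.mem_product.mpr ⟨hX₁, hX₂⟩, rfl⟩

def prodSubmoduleEquiv (X₁ : Submodule K V₁) (X₂ : Submodule K V₂) :
    (X₁ × X₂) ≃ₗ[K] X₁.prod X₂ where
  toFun x := ⟨(x.1, x.2), x.1.2, x.2.2⟩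
  invFun y := (⟨y.1.1, y.2.1⟩, ⟨y.1.2, y.2.2⟩)
  map_add' _ _ := rfl
  map_smul' _ _ := rfl
  left_inv _ := rfl
  right_inv _ := rfl

theorem finrank_prod_submodule [FiniteDimensional K V₁] [FiniteDimensional K V₂]
    (X₁ : Submodule K V₁) (X₂ : Submodule K V₂) :
    finrank K (X₁.prod X₂) = finrank K X₁ + finrank K X₂ :=
  (prodSubmoduleEquiv X₁ X₂).finrank_eq.symm.trans finrank_prod

theorem charPoly_prodArr [FiniteDimensional K V₁] [FiniteDimensional K V₂]
    (A₁ : Finset (Submodule K V₁)) (A₂ : Finset (Submodule K V₂)) :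
    charPoly K (prodArr K A₁ A₂) = charPoly K A₁ * charPoly K A₂ := by
  rw [charPoly, Finset.sum_congr (lattice_prodArr A₁ A₂) fun _ _ => rfl,
    Finset.sum_image fun _ _ _ _ h => prod_injective h, charPoly, charPoly, Finset.sum_mul_sum,
    ← Finset.sum_product']
  refine Finset.sum_congr rfl fun X hX => ?_
  rw [Finset.mem_product] at hX
  rw [mob_prodArr hX.1 hX.2, finrank_prod_submodule, pow_add, C_mul]
  ring

theorem restrict_prodArr (X₁ : Submodule K V₁) (X₂ : Submodule K V₂) :
    restrict K (prodArr K A₁ A₂) (X₁.prod X₂) =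
      (prodArr K (restrict K A₁ X₁) (restrict K A₂ X₂)).image
        (·.map (prodSubmoduleEquiv X₁ X₂ : (X₁ × X₂) →ₗ[K] X₁.prod X₂)) := by
  simp only [restrict, prodArr, Finset.filter_union, Finset.filter_image, Finset.image_union,
    Finset.image_image]
  rw [Finset.filter_congr fun H _ => not_congr (prod_le_prod_iff.trans (and_iff_left le_top)),
    Finset.filter_congr fun H _ => not_congr (prod_le_prod_iff.trans (and_iff_right le_top))]
  congr 1 <;> refine Finset.image_congr fun H _ => ?_ <;>
    rw [Function.comp_apply, Function.comp_apply, Submodule.map_equiv_eq_comap_symm] <;> ext <;>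
    simp [prodSubmoduleEquiv]

variable [FiniteDimensional K V₁] [FiniteDimensional K V₂]

theorem isDivision_prodArr_iff (h₁ : IsCentralArrangement K A₁)
    (h₂ : IsCentralArrangement K A₂) (X₁ : Submodule K V₁) (X₂ : Submodule K V₂) :
    IsDivision K (prodArr K A₁ A₂) (X₁.prod X₂) ↔
      IsDivFree K (prodArr K (restrict K A₁ X₁) (restrict K A₂ X₂)) ∧
        charPoly K (restrict K A₁ X₁) * charPoly K (restrict K A₂ X₂) ∣
          charPoly K A₁ * charPoly K A₂ := by
  rw [IsDivision, restrict_prodArr, isDivFree_map _ ((h₁.restrict X₁).prodArr (h₂.restrict X₂)),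
    charPoly_map, charPoly_prodArr, charPoly_prodArr]

theorem isDivFree_prodArr_of_finrank_le_two (h : finrank K V₁ + finrank K V₂ ≤ 2) :
    IsDivFree K (prodArr K A₁ A₂) ↔ IsDivFree K A₁ ∧ IsDivFree K A₂ :=
  iff_of_true (isDivFree_of_finrank_le_two (finrank_prod (R := K) (M := V₁) (M' := V₂) ▸ h))
    ⟨isDivFree_of_finrank_le_two (by omega), isDivFree_of_finrank_le_two (by omega)⟩

/-- The inductive step: `ih₁` and `ih₂` are the product formula one dimension down. -/
theorem isDivFree_prodArr_iff_of_restrict (h₁ : IsCentralArrangement K A₁)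
    (h₂ : IsCentralArrangement K A₂) (hlarge : 2 < finrank K V₁ + finrank K V₂)
    (ih₁ : ∀ H₁ ∈ A₁, IsDivFree K (prodArr K (restrict K A₁ H₁) (restrict K A₂ ⊤)) ↔
      IsDivFree K (restrict K A₁ H₁) ∧ IsDivFree K (restrict K A₂ ⊤))
    (ih₂ : ∀ H₂ ∈ A₂, IsDivFree K (prodArr K (restrict K A₁ ⊤) (restrict K A₂ H₂)) ↔
      IsDivFree K (restrict K A₁ ⊤) ∧ IsDivFree K (restrict K A₂ H₂)) :
    IsDivFree K (prodArr K A₁ A₂) ↔ IsDivFree K A₁ ∧ IsDivFree K A₂ := by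
  have hχ₁ := (charPoly_monic A₁).ne_zero
  have hχ₂ := (charPoly_monic A₂).ne_zero
  have hleft (H₁ : Submodule K V₁) (hH₁ : H₁ ∈ A₁) :
      IsDivision K (prodArr K A₁ A₂) (H₁.prod ⊤) ↔ IsDivision K A₁ H₁ ∧ IsDivFree K A₂ := by
    rw [isDivision_prodArr_iff h₁ h₂, ih₁ H₁ hH₁, isDivFree_restrict_top h₂,
      charPoly_restrict_top h₂, mul_dvd_mul_iff_right hχ₂, IsDivision]
    tauto
  have hright (H₂ : Submodule K V₂) (hH₂ : H₂ ∈ A₂) :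
      IsDivision K (prodArr K A₁ A₂) (Submodule.prod ⊤ H₂) ↔
        IsDivFree K A₁ ∧ IsDivision K A₂ H₂ := by
    rw [isDivision_prodArr_iff h₁ h₂, ih₂ H₂ hH₂, isDivFree_restrict_top h₁,
      charPoly_restrict_top h₁, mul_dvd_mul_iff_left hχ₁, IsDivision]
    tauto
  rw [isDivFree_iff (h₁.prodArr h₂), finrank_prod, or_iff_right hlarge.not_ge,
    prodArr_eq_empty_iff, exists_mem_prodArr]
  constructor
  · rintro (⟨rfl, rfl⟩ | ⟨H₁, hH₁, hdiv⟩ | ⟨H₂, hH₂, hdiv⟩)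
    · exact ⟨isDivFree_empty, isDivFree_empty⟩
    · obtain ⟨hdiv₁, hA₂⟩ := (hleft H₁ hH₁).mp hdiv
      exact ⟨hdiv₁.isDivFree hH₁ h₁, hA₂⟩
    · obtain ⟨hA₁, hdiv₂⟩ := (hright H₂ hH₂).mp hdiv
      exact ⟨hA₁, hdiv₂.isDivFree hH₂ h₂⟩
  · rintro ⟨hA₁, hA₂⟩
    rcases A₁.eq_empty_or_nonempty with rfl | hne₁
    · rcases A₂.eq_empty_or_nonempty with rfl | hne₂
      · exact Or.inl ⟨rfl, rfl⟩
      · obtain ⟨H₂, hH₂, hdiv⟩ := hA₂.exists_division h₂ hne₂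
        exact Or.inr (Or.inr ⟨H₂, hH₂, (hright H₂ hH₂).mpr ⟨hA₁, hdiv⟩⟩)
    · obtain ⟨H₁, hH₁, hdiv⟩ := hA₁.exists_division h₁ hne₁
      exact Or.inr (Or.inl ⟨H₁, hH₁, (hleft H₁ hH₁).mpr ⟨hdiv, hA₂⟩⟩)

end Product

universe x y in
theorem isDivFree_prodArr_iff_of_finrank_le (N : ℕ) :
    ∀ {V₁ : Type x} [AddCommGroup V₁] [Module K V₁] [FiniteDimensional K V₁]
      {V₂ : Type y} [AddCommGroup V₂] [Module K V₂] [FiniteDimensional K V₂]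
      {A₁ : Finset (Submodule K V₁)} {A₂ : Finset (Submodule K V₂)},
      IsCentralArrangement K A₁ → IsCentralArrangement K A₂ →
      finrank K V₁ + finrank K V₂ ≤ N →
      (IsDivFree K (prodArr K A₁ A₂) ↔ IsDivFree K A₁ ∧ IsDivFree K A₂) := by
  induction N with
  | zero =>
    intro V₁ _ _ _ V₂ _ _ _ A₁ A₂ _ _ hN
    exact isDivFree_prodArr_of_finrank_le_two (by omega)
  | succ N ih =>
    intro V₁ _ _ _ V₂ _ _ _ A₁ A₂ h₁ h₂ hN
    by_cases hsmall : finrank K V₁ + finrank K V₂ ≤ 2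
    · exact isDivFree_prodArr_of_finrank_le_two hsmall
    refine isDivFree_prodArr_iff_of_restrict h₁ h₂ (by omega) (fun H₁ hH₁ => ?_)
      (fun H₂ hH₂ => ?_)
    · have := (h₁ H₁ hH₁).finrank_add_one
      exact ih (h₁.restrict H₁) (h₂.restrict ⊤) (by rw [finrank_top]; omega)
    · have := (h₂ H₂ hH₂).finrank_add_one
      exact ih (h₁.restrict ⊤) (h₂.restrict H₂) (by rw [finrank_top]; omega)

end

/-- The product `A = A₁ × A₂` in `V₁ ⊕ V₂` is divisionally free if and only if
both `A₁` and `A₂` are divisionally free. -/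
theorem prod_divFree {K : Type*} [Field K]
    {V₁ : Type*} [AddCommGroup V₁] [Module K V₁] [FiniteDimensional K V₁]
    {V₂ : Type*} [AddCommGroup V₂] [Module K V₂] [FiniteDimensional K V₂]
    (A₁ : Finset (Submodule K V₁)) (A₂ : Finset (Submodule K V₂))
    (h₁ : IsCentralArrangement K A₁) (h₂ : IsCentralArrangement K A₂) :
    IsDivFree K (prodArr K A₁ A₂) ↔ IsDivFree K A₁ ∧ IsDivFree K A₂ :=
  isDivFree_prodArr_iff_of_finrank_le _ h₁ h₂ le_rfl

end Arrangement
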